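/- arXiv:0912.2398 — 2 statements merged into one kernel-verified Lean document; each statement's English description precedes it below -/
import Mathlib

section
/- Let $q \ge 2$ be an integer, $H = 1 - \frac{1}{2q}$, and let $V_n = \sum_{k=0}^{n-1} H_q(B^H_{k+1} - B^H_k)$ where $H_q$ is the $q$th Hermite polynomial. Then $\frac{E[V_n^2]}{n \log n} \to 2 \, q! \left(1 - \frac1q\right)^q \left(1 - \frac{1}{2q}\right)^q$ as $n \to \infty$. -/
open Filter MeasureTheory
open Real Set Topology

lemma aux_phi_lim (a : ℝ) (ha1 : 1 < a) (ha2 : a < 2) :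
    Tendsto (fun x : ℝ => ((1+x)^a + (1-x)^a - 2)/x^2) (nhdsWithin 0 (Set.Ioi 0))
      (nhds (a*(a-1))) := by
  have hmem : ∀ᶠ x : ℝ in 𝓝[>] 0, x ∈ Set.Ioo (0:ℝ) (1/2) := by
    apply Ioo_mem_nhdsGT_of_mem; constructor <;> norm_num
  have h1x : ∀ x : ℝ, x ∈ Set.Ioo (0:ℝ) (1/2) → (0:ℝ) < 1 + x := fun x hx => by linarith [hx.1]
  have h2x : ∀ x : ℝ, x ∈ Set.Ioo (0:ℝ) (1/2) → (0:ℝ) < 1 - x := fun x hx => by linarith [hx.2]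
  have hd1 : ∀ x : ℝ, x ∈ Set.Ioo (0:ℝ) (1/2) →
      HasDerivAt (fun y : ℝ => (1+y)^a + (1-y)^a - 2)
        (a*(1+x)^(a-1) - a*(1-x)^(a-1)) x := by
    intro x hx
    have h1 : HasDerivAt (fun y : ℝ => (1+y)^a) (a*(1+x)^(a-1)) x := by
      have := (hasDerivAt_id x).const_add (1:ℝ)
      have := this.rpow_const (p := a) (Or.inl (h1x x hx).ne')
      simpa using this
    have h2 : HasDerivAt (fun y : ℝ => (1-y)^a) (-(a*(1-x)^(a-1))) x := by
      have h0 : HasDerivAt (fun y : ℝ => 1 - y) (-1 : ℝ) x := by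
        exact (hasDerivAt_id' x).const_sub (1:ℝ)
      have := h0.rpow_const (p := a) (Or.inl (h2x x hx).ne')
      convert this using 1; ring
    simpa using ((h1.add h2).sub_const 2).congr_deriv (by ring)
  have hd2 : ∀ x : ℝ, x ∈ Set.Ioo (0:ℝ) (1/2) →
      HasDerivAt (fun y : ℝ => a*(1+y)^(a-1) - a*(1-y)^(a-1))
        (a*(a-1)*(1+x)^(a-2) + a*(a-1)*(1-x)^(a-2)) x := by
    intro x hx
    have h1 : HasDerivAt (fun y : ℝ => (1+y)^(a-1)) ((a-1)*(1+x)^(a-2)) x := by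
      have h := ((hasDerivAt_id x).const_add (1:ℝ)).rpow_const (p := a-1) (Or.inl (h1x x hx).ne')
      have e : a - 1 - 1 = a - 2 := by ring
      rw [e] at h; simpa using h
    have h2 : HasDerivAt (fun y : ℝ => (1-y)^(a-1)) (-((a-1)*(1-x)^(a-2))) x := by
      have h0 : HasDerivAt (fun y : ℝ => 1 - y) (-1 : ℝ) x := by
        exact (hasDerivAt_id' x).const_sub (1:ℝ)
      have h := h0.rpow_const (p := a-1) (Or.inl (h2x x hx).ne')
      have e : a - 1 - 1 = a - 2 := by ring
      rw [e] at h
      convert h using 1; ring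
    have := (h1.const_mul a).sub (h2.const_mul a)
    exact this.congr_deriv (by ring)
  -- continuity limits
  have hc1 : ContinuousAt (fun x : ℝ => (1+x)^a) 0 := by
    have : ContinuousAt (fun y : ℝ => y ^ a) (1 + 0 : ℝ) :=
      Real.continuousAt_rpow_const _ _ (Or.inl (by norm_num))
    exact this.comp (by fun_prop)
  have hc2 : ContinuousAt (fun x : ℝ => (1-x)^a) 0 := by
    have : ContinuousAt (fun y : ℝ => y ^ a) (1 - 0 : ℝ) :=
      Real.continuousAt_rpow_const _ _ (Or.inl (by norm_num))
    exact this.comp (by fun_prop)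
  have hc1' : ContinuousAt (fun x : ℝ => (1+x)^(a-1)) 0 := by
    have : ContinuousAt (fun y : ℝ => y ^ (a-1)) (1 + 0 : ℝ) :=
      Real.continuousAt_rpow_const _ _ (Or.inl (by norm_num))
    exact this.comp (by fun_prop)
  have hc2' : ContinuousAt (fun x : ℝ => (1-x)^(a-1)) 0 := by
    have : ContinuousAt (fun y : ℝ => y ^ (a-1)) (1 - 0 : ℝ) :=
      Real.continuousAt_rpow_const _ _ (Or.inl (by norm_num))
    exact this.comp (by fun_prop)
  have hc1'' : ContinuousAt (fun x : ℝ => (1+x)^(a-2)) 0 := by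
    have : ContinuousAt (fun y : ℝ => y ^ (a-2)) (1 + 0 : ℝ) :=
      Real.continuousAt_rpow_const _ _ (Or.inl (by norm_num))
    exact this.comp (by fun_prop)
  have hc2'' : ContinuousAt (fun x : ℝ => (1-x)^(a-2)) 0 := by
    have : ContinuousAt (fun y : ℝ => y ^ (a-2)) (1 - 0 : ℝ) :=
      Real.continuousAt_rpow_const _ _ (Or.inl (by norm_num))
    exact this.comp (by fun_prop)
  -- inner L'Hopital
  have hdiv : Tendsto (fun x : ℝ => (a*(a-1)*(1+x)^(a-2) + a*(a-1)*(1-x)^(a-2))/2)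
      (𝓝[>] (0:ℝ)) (nhds (a*(a-1))) := by
    have : Tendsto (fun x : ℝ => (a*(a-1)*(1+x)^(a-2) + a*(a-1)*(1-x)^(a-2))/2)
        (𝓝 (0:ℝ)) (nhds (a*(a-1))) := by
      have := (((hc1''.const_mul (a*(a-1))).tendsto.add (hc2''.const_mul (a*(a-1))).tendsto).div_const 2)
      convert this using 2
      norm_num [Real.one_rpow]
    exact this.mono_left nhdsWithin_le_nhds
  have inner : Tendsto (fun x : ℝ => (a*(1+x)^(a-1) - a*(1-x)^(a-1))/(2*x))
      (𝓝[>] (0:ℝ)) (nhds (a*(a-1))) := by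
    apply HasDerivAt.lhopital_zero_nhdsGT
      (f' := fun x => a*(a-1)*(1+x)^(a-2) + a*(a-1)*(1-x)^(a-2)) (g' := fun _ => (2:ℝ))
    · exact hmem.mono (fun x hx => hd2 x hx)
    · filter_upwards with x
      simpa using ((hasDerivAt_id x).const_mul (2:ℝ))
    · filter_upwards with x; norm_num
    · have : Tendsto (fun x : ℝ => a*(1+x)^(a-1) - a*(1-x)^(a-1)) (𝓝 (0:ℝ)) (nhds 0) := by
        have := ((hc1'.const_mul a).tendsto.sub (hc2'.const_mul a).tendsto)
        convert this using 2
        norm_num [Real.one_rpow]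
      exact this.mono_left nhdsWithin_le_nhds
    · have : Tendsto (fun x : ℝ => 2*x) (𝓝 (0:ℝ)) (nhds 0) :=
        (by fun_prop : Continuous fun x:ℝ => 2*x).tendsto' 0 0 (by norm_num)
      exact this.mono_left nhdsWithin_le_nhds
    · exact hdiv
  -- outer L'Hopital
  apply HasDerivAt.lhopital_zero_nhdsGT
    (f' := fun x => a*(1+x)^(a-1) - a*(1-x)^(a-1)) (g' := fun x => 2*x)
  · exact hmem.mono (fun x hx => hd1 x hx)
  · filter_upwards with x
    simpa using (hasDerivAt_pow 2 x)
  · filter_upwards [hmem] with x hx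
    have := hx.1; positivity
  · have : Tendsto (fun x : ℝ => (1+x)^a + (1-x)^a - 2) (𝓝 (0:ℝ)) (nhds 0) := by
      have h2 := ((hc1.tendsto.add hc2.tendsto).sub (tendsto_const_nhds (x := (2:ℝ))))
      convert h2 using 2
      norm_num [Real.one_rpow]
    exact this.mono_left nhdsWithin_le_nhds
  · have : Tendsto (fun x : ℝ => x^2) (𝓝 (0:ℝ)) (nhds 0) := by
      have := (continuous_pow 2).tendsto (0:ℝ); simpa using this
    exact this.mono_left nhdsWithin_le_nhds
  · exact inner

lemma aux_rho_lim (a : ℝ) (ha1 : 1 < a) (ha2 : a < 2) :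
    Tendsto (fun r : ℕ => (r:ℝ)^(2-a) *
      ((1/2)*(((r:ℝ)+1)^a + ((r:ℝ)-1)^a - 2*(r:ℝ)^a))) atTop (nhds (a*(a-1)/2)) := by
  have hx : Tendsto (fun r : ℕ => 1/(r:ℝ)) atTop (𝓝[>] (0:ℝ)) := by
    apply tendsto_nhdsWithin_of_tendsto_nhds_of_eventually_within
    · exact tendsto_one_div_atTop_nhds_zero_nat
    · filter_upwards [eventually_gt_atTop 0] with r hr
      have : (0:ℝ) < r := by exact_mod_cast hr
      exact mem_Ioi.mpr (by positivity)
  have hcomp := ((aux_phi_lim a ha1 ha2).comp hx).div_const 2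
  apply hcomp.congr'
  filter_upwards [eventually_ge_atTop 1] with r hr
  have hR : (1:ℝ) ≤ (r:ℝ) := by exact_mod_cast hr
  have hR0 : (0:ℝ) < r := by linarith
  have hxv : (0:ℝ) < 1/(r:ℝ) := by positivity
  set R := (r:ℝ) with hRdef
  have h1 : (R+1)^a = R^a * (1+1/R)^a := by
    rw [← Real.mul_rpow (by positivity) (by positivity)]
    congr 1; field_simp
  have h1R : (0:ℝ) ≤ 1 - 1/R := by
    rw [sub_nonneg, div_le_one hR0]; exact hR
  have h2 : (R-1)^a = R^a * (1-1/R)^a := by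
    rw [← Real.mul_rpow (by positivity) h1R]
    congr 1; field_simp
  have h3 : R^(2-a) * R^a = R^2 := by
    rw [← Real.rpow_add hR0]
    norm_num
  simp only [Function.comp]
  symm
  calc R^(2-a) * ((1/2)*((R+1)^a + (R-1)^a - 2*R^a))
      = (1/2) * (R^(2-a)*R^a) * ((1+1/R)^a + (1-1/R)^a - 2) := by rw [h1, h2]; ring
    _ = (1/2) * R^2 * ((1+1/R)^a + (1-1/R)^a - 2) := by rw [h3]
    _ = ((1+1/R)^a + (1-1/R)^a - 2)/(1/R)^2/2 := by
        rw [div_pow, one_pow, one_div (R^2), div_inv_eq_mul]; ring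

lemma aux_reindex (G : ℤ → ℝ) (n : ℕ) :
    ∑ l ∈ Finset.range n, G ((n:ℤ) - l) = ∑ r ∈ Finset.Ico 1 (n+1), G r := by
  rw [Finset.sum_Ico_eq_sum_range]
  simp only [Nat.add_sub_cancel]
  rw [← Finset.sum_range_reflect]
  apply Finset.sum_congr rfl
  intro j hj
  have hj' : j < n := Finset.mem_range.mp hj
  congr 1
  omega

lemma aux_sum_shift (F : ℤ → ℝ) (n : ℕ) :
    ∑ k ∈ Finset.range n, ∑ l ∈ Finset.range n, F ((k:ℤ) - l)
      = n * F 0 + ∑ r ∈ Finset.Ico 1 n, ((n:ℝ) - r) * (F r + F (-r)) := by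
  induction n with
  | zero => simp
  | succ n ih =>
    rcases Nat.eq_zero_or_pos n with hn | hn
    · subst hn; simp
    have hsplit : ∀ k : ℕ, ∑ l ∈ Finset.range (n+1), F ((k:ℤ) - l)
        = ∑ l ∈ Finset.range n, F ((k:ℤ) - l) + F ((k:ℤ) - n) :=
      fun k => Finset.sum_range_succ _ n
    rw [Finset.sum_range_succ, Finset.sum_congr rfl (fun k _ => hsplit k),
      Finset.sum_add_distrib, ih, hsplit n]
    have e1 : ∑ l ∈ Finset.range n, F ((n:ℤ) - l) = ∑ r ∈ Finset.Ico 1 (n+1), F r :=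
      aux_reindex F n
    have e2 : ∑ k ∈ Finset.range n, F ((k:ℤ) - n) = ∑ r ∈ Finset.Ico 1 (n+1), F (-r) := by
      have := aux_reindex (fun z => F (-z)) n
      rw [← this]
      apply Finset.sum_congr rfl
      intro k _
      congr 1; ring
    rw [e1, e2]
    have e3 : ∑ r ∈ Finset.Ico 1 (n+1), ((n:ℝ)+1 - r) * (F r + F (-r))
        = ∑ r ∈ Finset.Ico 1 n, ((n:ℝ) - r) * (F r + F (-r))
          + (∑ r ∈ Finset.Ico 1 (n+1), F r + ∑ r ∈ Finset.Ico 1 (n+1), F (-r)) := by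
      have e4 : ∑ r ∈ Finset.Ico 1 (n+1), ((n:ℝ) - r) * (F r + F (-r))
          = ∑ r ∈ Finset.Ico 1 n, ((n:ℝ) - r) * (F r + F (-r)) := by
        rw [Finset.sum_Ico_succ_top hn]
        simp
      calc ∑ r ∈ Finset.Ico 1 (n+1), ((n:ℝ)+1 - r) * (F r + F (-r))
          = ∑ r ∈ Finset.Ico 1 (n+1), (((n:ℝ) - r) * (F r + F (-r)) + (F r + F (-r))) := by
            apply Finset.sum_congr rfl; intro r _; ring
        _ = ∑ r ∈ Finset.Ico 1 (n+1), ((n:ℝ) - r) * (F r + F (-r))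
              + (∑ r ∈ Finset.Ico 1 (n+1), F r + ∑ r ∈ Finset.Ico 1 (n+1), F (-r)) := by
            rw [Finset.sum_add_distrib, Finset.sum_add_distrib]
        _ = _ := by rw [e4]
    push_cast
    rw [e3]
    simp only [sub_self]
    set P := F 0 with hP
    set S1 := ∑ r ∈ Finset.Ico 1 n, ((n:ℝ) - (r:ℝ)) * (F (r:ℤ) + F (-(r:ℤ))) with hS1
    set B := ∑ r ∈ Finset.Ico 1 (n+1), F (-(r:ℤ)) with hB
    set C := ∑ r ∈ Finset.Ico 1 (n+1), F (r:ℤ) with hC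
    ring

lemma aux_harm (m : ℕ) : ∑ r ∈ Finset.Ico 1 (m+1), (1:ℝ)/r = (harmonic m : ℝ) := by
  rw [Finset.Ico_add_one_right_eq_Icc, harmonic_eq_sum_Icc]
  push_cast
  simp [one_div]

lemma aux_h_lb (n : ℕ) (hn : 1 ≤ n) : Real.log n ≤ ∑ r ∈ Finset.Ico 1 n, (1:ℝ)/r := by
  obtain ⟨m, rfl⟩ := Nat.exists_eq_add_of_le hn
  rw [add_comm, aux_harm]
  exact_mod_cast log_add_one_le_harmonic m

lemma aux_h_ub (n : ℕ) (hn : 1 ≤ n) : ∑ r ∈ Finset.Ico 1 n, (1:ℝ)/r ≤ 1 + Real.log n := by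
  obtain ⟨m, rfl⟩ := Nat.exists_eq_add_of_le hn
  rw [add_comm, aux_harm]
  have hlog : Real.log m ≤ Real.log ((m:ℝ)+1) := by
    rcases Nat.eq_zero_or_pos m with h | h
    · subst h; simp
    · exact Real.log_le_log (by exact_mod_cast h) (by linarith)
  have := harmonic_le_one_add_log m
  push_cast
  linarith

lemma aux_log_tendsto : Tendsto (fun n : ℕ => Real.log n) atTop atTop :=
  Real.tendsto_log_atTop.comp tendsto_natCast_atTop_atTop

lemma aux_cesaro_log (b : ℕ → ℝ) (L : ℝ) (hb : Tendsto b atTop (nhds L)) :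
    Tendsto (fun n : ℕ => (∑ r ∈ Finset.Ico 1 n, b r / r) / Real.log n) atTop (nhds L) := by
  set hsum : ℕ → ℝ := fun n => ∑ r ∈ Finset.Ico 1 n, (1:ℝ)/r with hdef
  -- step 1 : the centered part tends to 0
  have key0 : Tendsto (fun n : ℕ => (∑ r ∈ Finset.Ico 1 n, (b r - L) / r) / Real.log n)
      atTop (nhds 0) := by
    rw [Metric.tendsto_atTop]
    intro ε hε
    obtain ⟨N₀', hN₀'⟩ := Metric.tendsto_atTop.mp hb (ε/4) (by positivity)
    set N0 := max N₀' 1 with hN0def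
    have h1N0 : 1 ≤ N0 := le_max_right _ _
    set C := ∑ r ∈ Finset.Ico 1 N0, |b r - L|/(r:ℝ) with hCdef
    have hC0 : 0 ≤ C := Finset.sum_nonneg (fun r hr => by positivity)
    obtain ⟨N₁, hN₁⟩ := eventually_atTop.mp
      (aux_log_tendsto.eventually_ge_atTop (max 2 (4*C/ε)))
    refine ⟨max N0 N₁, fun n hn => ?_⟩
    have hnN0 : N0 ≤ n := le_trans (le_max_left _ _) hn
    have hnN1 : N₁ ≤ n := le_trans (le_max_right _ _) hn
    have hlog2 : 2 ≤ Real.log n := le_trans (le_max_left _ _) (hN₁ n hnN1)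
    have hlogC : 4*C/ε ≤ Real.log n := le_trans (le_max_right _ _) (hN₁ n hnN1)
    have hlogpos : (0:ℝ) < Real.log n := lt_of_lt_of_le two_pos hlog2
    rw [Real.dist_eq, sub_zero, abs_div, abs_of_pos hlogpos, div_lt_iff₀ hlogpos]
    have hs : ∑ r ∈ Finset.Ico 1 n, (b r - L)/r
        = ∑ r ∈ Finset.Ico 1 N0, (b r - L)/r + ∑ r ∈ Finset.Ico N0 n, (b r - L)/r :=
      (Finset.sum_Ico_consecutive _ h1N0 hnN0).symm
    have habs : ∀ m k : ℕ, ∀ hmk : m ≤ k, |∑ r ∈ Finset.Ico m k, (b r - L)/r|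
        ≤ ∑ r ∈ Finset.Ico m k, |b r - L|/r := by
      intro m k _
      refine le_trans (Finset.abs_sum_le_sum_abs _ _) (le_of_eq ?_)
      apply Finset.sum_congr rfl
      intro r _
      rw [abs_div, abs_of_nonneg (by positivity : (0:ℝ) ≤ (r:ℝ))]
    have htail : ∑ r ∈ Finset.Ico N0 n, |b r - L|/r ≤ (ε/4) * (1 + Real.log n) := by
      calc ∑ r ∈ Finset.Ico N0 n, |b r - L|/r
          ≤ ∑ r ∈ Finset.Ico N0 n, (ε/4) * (1/r) := by
            apply Finset.sum_le_sum
            intro r hr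
            have hrN : N₀' ≤ r := le_trans (le_max_left _ _) (Finset.mem_Ico.mp hr).1
            have := hN₀' r hrN
            rw [Real.dist_eq] at this
            have hr1 : 1 ≤ r := le_trans h1N0 (Finset.mem_Ico.mp hr).1
            have hrpos : (0:ℝ) < r := by exact_mod_cast hr1
            have hle : |b r - L| ≤ ε/4 := le_of_lt this
            rw [div_eq_mul_one_div]
            gcongr
        _ = (ε/4) * ∑ r ∈ Finset.Ico N0 n, (1/(r:ℝ)) := by rw [Finset.mul_sum]
        _ ≤ (ε/4) * hsum n := by
            gcongr
            apply Finset.sum_le_sum_of_subset_of_nonneg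
            · exact Finset.Ico_subset_Ico h1N0 le_rfl
            · intro r _ _; positivity
        _ ≤ (ε/4) * (1 + Real.log n) := by
            gcongr
            exact aux_h_ub n (le_trans h1N0 hnN0)
    have hhead : |∑ r ∈ Finset.Ico 1 N0, (b r - L)/r| ≤ C := habs 1 N0 h1N0
    have hbound : |∑ r ∈ Finset.Ico 1 n, (b r - L)/r| ≤ C + (ε/4)*(1 + Real.log n) := by
      rw [hs]
      refine le_trans (abs_add_le _ _) (add_le_add hhead (le_trans (habs N0 n hnN0) htail))
    have h4C : 4*C ≤ Real.log n * ε := by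
      rw [div_le_iff₀ hε] at hlogC; linarith
    have h24 : (ε/4)*2 ≤ (ε/4)*Real.log n := by
      apply mul_le_mul_of_nonneg_left hlog2 (by positivity)
    calc |∑ r ∈ Finset.Ico 1 n, (b r - L)/r| ≤ C + (ε/4)*(1 + Real.log n) := hbound
      _ < ε * Real.log n := by nlinarith
  -- step 2 : h n / log n → 1
  have hh1 : Tendsto (fun n : ℕ => hsum n / Real.log n) atTop (nhds 1) := by
    apply tendsto_of_tendsto_of_tendsto_of_le_of_le'
      (g := fun _ : ℕ => (1:ℝ)) (h := fun n : ℕ => 1/Real.log n + 1)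
    · exact tendsto_const_nhds
    · have : Tendsto (fun n : ℕ => 1/Real.log n) atTop (nhds 0) :=
        tendsto_const_nhds.div_atTop aux_log_tendsto
      simpa using this.add tendsto_const_nhds
    · filter_upwards [aux_log_tendsto.eventually_ge_atTop 1, eventually_ge_atTop 1]
        with n hln hn1
      have hlp : (0:ℝ) < Real.log n := lt_of_lt_of_le one_pos hln
      rw [le_div_iff₀ hlp, one_mul]
      exact aux_h_lb n hn1
    · filter_upwards [aux_log_tendsto.eventually_ge_atTop 1, eventually_ge_atTop 1]
        with n hln hn1
      have hlp : (0:ℝ) < Real.log n := lt_of_lt_of_le one_pos hln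
      rw [div_le_iff₀ hlp, add_mul, one_div, inv_mul_cancel₀ (ne_of_gt hlp), one_mul]
      have := aux_h_ub n hn1
      linarith
  -- step 3 : combine
  have decomp : (fun n : ℕ => (∑ r ∈ Finset.Ico 1 n, b r / r) / Real.log n)
      = fun n : ℕ => (∑ r ∈ Finset.Ico 1 n, (b r - L) / r) / Real.log n
          + L * (hsum n / Real.log n) := by
    funext n
    have : ∑ r ∈ Finset.Ico 1 n, b r / r
        = ∑ r ∈ Finset.Ico 1 n, (b r - L) / r + L * hsum n := by
      rw [hdef, Finset.mul_sum, ← Finset.sum_add_distrib]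
      apply Finset.sum_congr rfl
      intro r _
      rw [mul_one_div, ← add_div, sub_add_cancel]
    rw [this, add_div, mul_div_assoc]
  rw [decomp]
  have := key0.add (hh1.const_mul L)
  simpa using this

lemma aux_weighted (c : ℕ → ℝ) (L : ℝ)
    (hb : Tendsto (fun r : ℕ => (r:ℝ) * c r) atTop (nhds L)) :
    Tendsto (fun n : ℕ => (∑ r ∈ Finset.Ico 1 n, ((n:ℝ) - r) * c r) / ((n:ℝ) * Real.log n))
      atTop (nhds L) := by
  set b : ℕ → ℝ := fun r => (r:ℝ) * c r with hbdef
  have t1 : Tendsto (fun n : ℕ => (∑ r ∈ Finset.Ico 1 n, b r / r) / Real.log n)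
      atTop (nhds L) := aux_cesaro_log b L hb
  have t2 : Tendsto (fun n : ℕ => ((n:ℝ)⁻¹ * ∑ r ∈ Finset.range n, b r) * (Real.log n)⁻¹)
      atTop (nhds 0) := by
    have hinv : Tendsto (fun n : ℕ => (Real.log n)⁻¹) atTop (nhds 0) :=
      aux_log_tendsto.inv_tendsto_atTop
    have := hb.cesaro.mul hinv
    simpa using this
  have t3 := t1.sub t2
  rw [sub_zero] at t3
  apply t3.congr'
  filter_upwards [eventually_ge_atTop 2] with n hn
  have hn0 : (0:ℝ) < n := by
    have : (2:ℝ) ≤ n := by exact_mod_cast hn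
    linarith
  have hlogpos : (0:ℝ) < Real.log n := by
    apply Real.log_pos
    have : (2:ℝ) ≤ n := by exact_mod_cast hn
    linarith
  have hb0 : b 0 = 0 := by simp [hbdef]
  have hr0 : ∑ r ∈ Finset.range n, b r = ∑ r ∈ Finset.Ico 1 n, b r := by
    rw [Finset.range_eq_Ico, Finset.sum_eq_sum_Ico_succ_bot (by omega : 0 < n), hb0, zero_add]
  have hsum : ∑ r ∈ Finset.Ico 1 n, ((n:ℝ) - r) * c r
      = (n:ℝ) * ∑ r ∈ Finset.Ico 1 n, b r / r - ∑ r ∈ Finset.Ico 1 n, b r := by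
    rw [Finset.mul_sum, ← Finset.sum_sub_distrib]
    apply Finset.sum_congr rfl
    intro r hr
    have hr1 : 1 ≤ r := (Finset.mem_Ico.mp hr).1
    have hrne : (r:ℝ) ≠ 0 := by
      have : (1:ℝ) ≤ r := by exact_mod_cast hr1
      linarith
    rw [hbdef]
    simp only
    field_simp
  rw [← hr0] at hsum
  rw [hsum]
  field_simp

theorem stmt_8 {Ω : Type*} [MeasurableSpace Ω] (μ : Measure Ω) [IsProbabilityMeasure μ]
    (q : ℕ) (hq : 2 ≤ q) (H : ℝ) (hH : H = 1 - 1 / (2 * (q : ℝ)))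
    (B : ℕ → Ω → ℝ) (ρ : ℤ → ℝ)
    (hρ : ∀ r : ℤ, ρ r =
      (1/2) * (|(r : ℝ) + 1| ^ (2*H) + |(r : ℝ) - 1| ^ (2*H) - 2 * |(r : ℝ)| ^ (2*H)))
    (hInt : ∀ k l : ℕ, Integrable (fun ω =>
      (Polynomial.aeval (B (k+1) ω - B k ω) (Polynomial.hermite q) : ℝ) *
      (Polynomial.aeval (B (l+1) ω - B l ω) (Polynomial.hermite q) : ℝ)) μ)
    (hHerm : ∀ k l : ℕ,
      ∫ ω, (Polynomial.aeval (B (k+1) ω - B k ω) (Polynomial.hermite q) : ℝ) *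
        (Polynomial.aeval (B (l+1) ω - B l ω) (Polynomial.hermite q) : ℝ) ∂μ
      = (Nat.factorial q : ℝ) * ρ ((k : ℤ) - (l : ℤ)) ^ q) :
    Tendsto (fun n : ℕ =>
      (∫ ω, (∑ k ∈ Finset.range n,
        (Polynomial.aeval (B (k+1) ω - B k ω) (Polynomial.hermite q) : ℝ)) ^ 2 ∂μ)
        / ((n : ℝ) * Real.log n))
      atTop
      (nhds (2 * (Nat.factorial q : ℝ) * (1 - 1/(q:ℝ)) ^ q * (1 - 1/(2*(q:ℝ))) ^ q)) := by
  have hq2 : (2:ℝ) ≤ (q:ℝ) := by exact_mod_cast hq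
  have hqpos : (0:ℝ) < q := by linarith
  have hqne : (q:ℝ) ≠ 0 := ne_of_gt hqpos
  set a : ℝ := 2*H with hadef
  have ha : a = 2 - 1/(q:ℝ) := by rw [hadef, hH]; field_simp
  have ha1 : 1 < a := by
    rw [ha]
    have : 1/(q:ℝ) ≤ 1/2 := by
      apply div_le_div_of_nonneg_left <;> linarith
    linarith
  have ha2 : a < 2 := by
    rw [ha]
    have : 0 < 1/(q:ℝ) := by positivity
    linarith
  have hane : a ≠ 0 := by linarith
  -- basic facts about ρ
  have hρ0 : ρ 0 = 1 := by
    rw [hρ 0]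
    simp [Real.zero_rpow hane, Real.one_rpow]
    norm_num
  have heven : ∀ r : ℤ, ρ (-r) = ρ r := by
    intro r
    rw [hρ, hρ]
    push_cast
    rw [show -(r:ℝ) + 1 = -((r:ℝ) - 1) by ring, show -(r:ℝ) - 1 = -((r:ℝ) + 1) by ring,
      abs_neg, abs_neg, abs_neg]
    ring_nf
  have hρnat : ∀ r : ℕ, 1 ≤ r →
      ρ (r:ℤ) = (1/2)*(((r:ℝ)+1)^a + ((r:ℝ)-1)^a - 2*(r:ℝ)^a) := by
    intro r hr
    have h1 : (1:ℝ) ≤ (r:ℝ) := by exact_mod_cast hr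
    rw [hρ]
    push_cast
    rw [abs_of_nonneg (by linarith : (0:ℝ) ≤ (r:ℝ) + 1),
      abs_of_nonneg (by linarith : (0:ℝ) ≤ (r:ℝ) - 1),
      abs_of_nonneg (by linarith : (0:ℝ) ≤ (r:ℝ))]
  -- convergence of r * ρ(r)^q
  have hconv : Tendsto (fun r : ℕ => (r:ℝ) * ρ (r:ℤ) ^ q) atTop
      (nhds ((a*(a-1)/2)^q)) := by
    have hpow := (aux_rho_lim a ha1 ha2).pow q
    apply hpow.congr'
    filter_upwards [eventually_ge_atTop 1] with r hr
    have hrn : (0:ℝ) ≤ (r:ℝ) := by positivity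
    rw [mul_pow, ← hρnat r hr]
    congr 1
    rw [← Real.rpow_natCast ((r:ℝ)^(2-a)) q, ← Real.rpow_mul hrn]
    have he : (2-a)*(q:ℝ) = 1 := by rw [ha]; field_simp; ring
    rw [he, Real.rpow_one]
  have hW := aux_weighted (fun r : ℕ => ρ (r:ℤ) ^ q) ((a*(a-1)/2)^q) hconv
  -- the integral identity
  set X : ℕ → Ω → ℝ :=
    fun k ω => (Polynomial.aeval (B (k+1) ω - B k ω) (Polynomial.hermite q) : ℝ) with hX
  have hEV : ∀ n : ℕ, (∫ ω, (∑ k ∈ Finset.range n, X k ω)^2 ∂μ)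
      = (q.factorial : ℝ) * ((n:ℝ) + ∑ r ∈ Finset.Ico 1 n, ((n:ℝ) - r) * (2 * ρ (r:ℤ) ^ q)) := by
    intro n
    have e1 : (fun ω => (∑ k ∈ Finset.range n, X k ω)^2)
        = fun ω => ∑ k ∈ Finset.range n, ∑ l ∈ Finset.range n, X k ω * X l ω := by
      funext ω; rw [sq, Finset.sum_mul_sum]
    rw [e1, integral_finset_sum _ (fun k _ => integrable_finset_sum _ (fun l _ => hInt k l)),
      Finset.sum_congr rfl (fun k _ => integral_finset_sum _ (fun l _ => hInt k l)),
      Finset.sum_congr rfl (fun k _ => Finset.sum_congr rfl (fun l _ => hHerm k l))]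
    simp_rw [← Finset.mul_sum]
    rw [aux_sum_shift (fun z => ρ z ^ q) n]
    congr 1
    rw [hρ0, one_pow, mul_one]
    congr 1
    apply Finset.sum_congr rfl
    intro r _
    rw [heven]
    ring
  -- final combination of limits
  have hlog0 : Tendsto (fun n : ℕ => 1/Real.log n) atTop (nhds 0) :=
    tendsto_const_nhds.div_atTop aux_log_tendsto
  have final := (hlog0.const_mul (q.factorial : ℝ)).add (hW.const_mul (2*(q.factorial:ℝ)))
  rw [mul_zero, zero_add] at final
  have hval : a*(a-1)/2 = (1-1/(q:ℝ)) * (1-1/(2*(q:ℝ))) := by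
    rw [ha]; field_simp; ring
  have hvq : 2*(q.factorial:ℝ) * ((a*(a-1)/2)^q)
      = 2 * (Nat.factorial q : ℝ) * (1 - 1/(q:ℝ)) ^ q * (1 - 1/(2*(q:ℝ))) ^ q := by
    rw [hval, mul_pow]; ring
  rw [hvq] at final
  apply final.congr'
  filter_upwards [eventually_ge_atTop 2] with n hn
  have hn2 : (2:ℝ) ≤ (n:ℝ) := by exact_mod_cast hn
  have hn0 : (0:ℝ) < n := by linarith
  have hlogpos : (0:ℝ) < Real.log n := Real.log_pos (by linarith)
  rw [hEV n]
  have hs2 : ∑ r ∈ Finset.Ico 1 n, ((n:ℝ) - r) * (2 * ρ (r:ℤ) ^ q)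
      = 2 * ∑ r ∈ Finset.Ico 1 n, ((n:ℝ) - r) * ρ (r:ℤ) ^ q := by
    rw [Finset.mul_sum]
    apply Finset.sum_congr rfl
    intro r _
    ring
  rw [hs2]
  field_simp
end

section
/- Let $G$ be a real random variable with $E[G] = 0$, and suppose there exists a nonnegative random variable $W$ such that for every $C^1$ Lipschitz function $h:\mathbb{R}\to\mathbb{C}$, $E[G h(G)] = E[h'(G) W]$ (so in particular $E[G^2] = E[W]$). Then for every $t \in \mathbb{R}$, $|E[e^{itG}] - e^{-t^2/2}| \le |t| \cdot |1 - E[G^2]| + |t| \sqrt{\mathrm{Var}(W)}$. -/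
open MeasureTheory Complex

lemma aux_cs {Ω : Type*} [MeasurableSpace Ω] (μ : Measure Ω) [IsProbabilityMeasure μ]
    (f : Ω → ℝ) (hf : Integrable f μ) (hf2 : Integrable (fun ω => f ω ^ 2) μ) :
    ∫ ω, |f ω| ∂μ ≤ Real.sqrt (∫ ω, f ω ^ 2 ∂μ) := by
  set S : ℝ := Real.sqrt (∫ ω, f ω ^ 2 ∂μ) with hS
  have hS0 : 0 ≤ S := Real.sqrt_nonneg _
  have hSsq : S ^ 2 = ∫ ω, f ω ^ 2 ∂μ := by
    rw [hS, Real.sq_sqrt]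
    exact integral_nonneg fun ω => sq_nonneg _
  refine le_of_forall_pos_le_add fun ε hε => ?_
  have hc : (0:ℝ) < S + ε := by linarith
  have hpt : ∀ ω, |f ω| ≤ (f ω ^ 2 / (S + ε) + (S + ε)) / 2 := by
    intro ω
    rw [← sub_nonneg]
    have h1 : (f ω ^ 2 / (S + ε) + (S + ε)) / 2 - |f ω| = (|f ω| - (S + ε))^2 / (2 * (S + ε)) := by
      field_simp
      nlinarith [_root_.sq_abs (f ω)]
    rw [h1]
    positivity
  have hint : Integrable (fun ω => (f ω ^ 2 / (S + ε) + (S + ε)) / 2) μ :=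
    ((hf2.div_const _).add (integrable_const _)).div_const _
  calc ∫ ω, |f ω| ∂μ ≤ ∫ ω, (f ω ^ 2 / (S + ε) + (S + ε)) / 2 ∂μ :=
        integral_mono hf.abs hint hpt
    _ = ((∫ ω, f ω ^ 2 ∂μ) / (S + ε) + (S + ε)) / 2 := by
        rw [integral_div, integral_add (hf2.div_const _) (integrable_const _),
          integral_div, integral_const]
        simp
    _ ≤ S + ε := by
        rw [← hSsq, div_le_iff₀ two_pos]
        have : S ^ 2 / (S + ε) ≤ S + ε := by
          rw [div_le_iff₀ hc]; nlinarith
        linarith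

lemma aux_deriv (c : ℂ) (s : ℝ) :
    HasDerivAt (fun s : ℝ => Complex.exp ((s:ℂ) * c)) (c * Complex.exp ((s:ℂ) * c)) s := by
  have h1 : HasDerivAt (fun s:ℝ => (s:ℂ)) 1 s := by simpa using (hasDerivAt_id s).ofReal_comp
  simpa [mul_comm] using (h1.mul_const c).cexp

lemma aux_norm_exp (s x : ℝ) : ‖Complex.exp ((s:ℂ) * (x:ℂ) * I)‖ = 1 := by
  have h : ((s:ℂ) * (x:ℂ) * I).re = 0 := by simp
  simp only [Complex.norm_exp, h, Real.exp_zero]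

lemma aux_deriv' (s x : ℝ) : HasDerivAt (fun x : ℝ => Complex.exp ((s:ℂ) * (x:ℂ) * I))
    (((s:ℂ) * I) * Complex.exp ((s:ℂ) * (x:ℂ) * I)) x := by
  have := aux_deriv ((s:ℂ) * I) x
  simpa [mul_comm, mul_assoc, mul_left_comm] using this

lemma aux_lip (s : ℝ) : LipschitzWith ‖s‖₊ (fun x : ℝ => Complex.exp ((s:ℂ) * (x:ℂ) * I)) := by
  have hd := aux_deriv' s
  refine lipschitzWith_of_nnnorm_deriv_le (fun x => (hd x).differentiableAt) fun x => ?_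
  rw [← NNReal.coe_le_coe, coe_nnnorm, coe_nnnorm, (hd x).deriv]
  rw [norm_mul, aux_norm_exp, norm_mul, Complex.norm_I, Complex.norm_real]
  simp [Real.norm_eq_abs]

lemma aux_key {Ω : Type*} [MeasurableSpace Ω] (μ : Measure Ω) [IsProbabilityMeasure μ]
    (G : Ω → ℝ) (W : Ω → ℝ)
    (hGint : Integrable G μ) (hG2int : Integrable (fun ω => (G ω) ^ 2) μ)
    (hWint : Integrable W μ) (hW2int : Integrable (fun ω => (W ω) ^ 2) μ)
    (hibp : ∀ (K : NNReal) (h h' : ℝ → ℂ), (∀ x, HasDerivAt h (h' x) x) → LipschitzWith K h →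
      ∫ ω, (G ω : ℂ) * h (G ω) ∂μ = ∫ ω, h' (G ω) * (W ω : ℂ) ∂μ)
    (t : ℝ) (ht : 0 ≤ t) :
    ‖(∫ ω, Complex.exp ((t : ℂ) * (G ω : ℂ) * Complex.I) ∂μ) - Complex.exp (-(t : ℂ) ^ 2 / 2)‖
      ≤ |t| * |1 - ∫ ω, (G ω) ^ 2 ∂μ|
        + |t| * Real.sqrt (∫ ω, (W ω - ∫ ω', W ω' ∂μ) ^ 2 ∂μ) := by
  have aesG : AEStronglyMeasurable G μ := hGint.aestronglyMeasurable
  have aesW : AEStronglyMeasurable W μ := hWint.aestronglyMeasurable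
  -- measurability and integrability of exp(isG)
  have meas_exp : ∀ s : ℝ, AEStronglyMeasurable (fun ω => Complex.exp ((s:ℂ) * (G ω:ℂ) * I)) μ := by
    intro s
    have hc : Continuous (fun x : ℝ => Complex.exp ((s:ℂ) * (x:ℂ) * I)) := by
      apply Complex.continuous_exp.comp
      exact (continuous_const.mul Complex.continuous_ofReal).mul continuous_const
    exact hc.comp_aestronglyMeasurable aesG
  have int_exp : ∀ s : ℝ, Integrable (fun ω => Complex.exp ((s:ℂ) * (G ω:ℂ) * I)) μ := by
    intro s
    exact (integrable_const (1:ℝ)).mono' (meas_exp s)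
      (Filter.Eventually.of_forall fun ω => by simpa using (aux_norm_exp s (G ω)).le)
  have int_expW : ∀ s : ℝ, Integrable (fun ω => Complex.exp ((s:ℂ) * (G ω:ℂ) * I) * (W ω:ℂ)) μ := by
    intro s
    exact hWint.ofReal.bdd_mul (meas_exp s) (c := 1) (Filter.Eventually.of_forall fun ω => by rw [aux_norm_exp])
  -- Step A : E W = E G^2
  have hW_eq : ∫ ω, W ω ∂μ = ∫ ω, G ω ^ 2 ∂μ := by
    have h1 : ∀ x : ℝ, HasDerivAt (fun x : ℝ => (x:ℂ)) ((fun _ : ℝ => (1:ℂ)) x) x := by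
      intro x; simpa using (hasDerivAt_id x).ofReal_comp
    have := hibp 1 (fun x => (x:ℂ)) (fun _ => 1) h1 Complex.isometry_ofReal.lipschitz
    simp only [one_mul] at this
    have l : ∫ ω, (G ω:ℂ) * (G ω:ℂ) ∂μ = ((∫ ω, G ω ^ 2 ∂μ : ℝ) : ℂ) := by
      have e : ∀ ω, (G ω:ℂ) * (G ω:ℂ) = ((G ω ^ 2 : ℝ) : ℂ) := fun ω => by push_cast; ring
      simp_rw [e]; exact integral_ofReal
    have r : ∫ ω, (W ω:ℂ) ∂μ = ((∫ ω, W ω ∂μ : ℝ) : ℂ) := integral_ofReal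
    rw [l, r] at this
    exact_mod_cast this.symm
  -- notation
  set F : ℝ → ℂ := fun s => ∫ ω, Complex.exp ((s:ℂ) * (G ω:ℂ) * I) ∂μ with hFdef
  -- Step B : derivative of F
  have hF' : ∀ s : ℝ, HasDerivAt F
      (∫ ω, ((G ω:ℂ) * I) * Complex.exp ((s:ℂ) * (G ω:ℂ) * I) ∂μ) s := by
    intro s
    have cont' : ∀ u : ℝ, AEStronglyMeasurable
        (fun ω => ((G ω:ℂ) * I) * Complex.exp ((u:ℂ) * (G ω:ℂ) * I)) μ := by
      intro u
      have hc : Continuous (fun x : ℝ => ((x:ℂ) * I) * Complex.exp ((u:ℂ) * (x:ℂ) * I)) := by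
        apply Continuous.mul
        · exact Complex.continuous_ofReal.mul continuous_const
        · exact Complex.continuous_exp.comp
            ((continuous_const.mul Complex.continuous_ofReal).mul continuous_const)
      exact hc.comp_aestronglyMeasurable aesG
    refine (hasDerivAt_integral_of_dominated_loc_of_deriv_le (Metric.ball_mem_nhds s zero_lt_one)
      (F' := fun u ω => ((G ω:ℂ) * I) * Complex.exp ((u:ℂ) * (G ω:ℂ) * I))
      (Filter.Eventually.of_forall fun u => meas_exp u) (int_exp s) (cont' s)
      (bound := fun ω => |G ω|) ?_ hGint.abs ?_).2
    · refine Filter.Eventually.of_forall fun ω => fun u _ => ?_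
      rw [norm_mul, aux_norm_exp, mul_one, norm_mul, Complex.norm_I, mul_one,
        Complex.norm_real, Real.norm_eq_abs]
    · refine Filter.Eventually.of_forall fun ω => fun u _ => ?_
      have := aux_deriv ((G ω:ℂ) * I) u
      simpa [mul_comm, mul_assoc, mul_left_comm] using this
  -- Step C : integration by parts at each s
  have hibp_s : ∀ s : ℝ, ∫ ω, (G ω:ℂ) * Complex.exp ((s:ℂ) * (G ω:ℂ) * I) ∂μ
      = ∫ ω, (((s:ℂ) * I) * Complex.exp ((s:ℂ) * (G ω:ℂ) * I)) * (W ω:ℂ) ∂μ :=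
    fun s => hibp ‖s‖₊ _ _ (aux_deriv' s) (aux_lip s)
  -- rewrite F'
  have hF'eq : ∀ s : ℝ, (∫ ω, ((G ω:ℂ) * I) * Complex.exp ((s:ℂ) * (G ω:ℂ) * I) ∂μ)
      = -(s:ℂ) * ∫ ω, Complex.exp ((s:ℂ) * (G ω:ℂ) * I) * (W ω:ℂ) ∂μ := by
    intro s
    have e1 : ∀ ω, ((G ω:ℂ) * I) * Complex.exp ((s:ℂ) * (G ω:ℂ) * I)
        = I * ((G ω:ℂ) * Complex.exp ((s:ℂ) * (G ω:ℂ) * I)) := fun ω => by ring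
    have e2 : ∀ ω, (((s:ℂ) * I) * Complex.exp ((s:ℂ) * (G ω:ℂ) * I)) * (W ω:ℂ)
        = ((s:ℂ) * I) * (Complex.exp ((s:ℂ) * (G ω:ℂ) * I) * (W ω:ℂ)) := fun ω => by ring
    simp_rw [e1]
    rw [integral_const_mul, hibp_s s]
    simp_rw [e2]
    rw [integral_const_mul, ← mul_assoc]
    rw [show I * ((s:ℂ) * I) = -(s:ℂ) by rw [mul_left_comm, Complex.I_mul_I]; ring]
  -- the quantities A and D
  set A : ℝ := ∫ ω, |1 - W ω| ∂μ with hAdef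
  have hA0 : (0:ℝ) ≤ A := integral_nonneg fun ω => abs_nonneg _
  set D : ℝ → ℂ := fun s => F s - ∫ ω, Complex.exp ((s:ℂ) * (G ω:ℂ) * I) * (W ω:ℂ) ∂μ with hDdef
  have hDbound : ∀ s, ‖D s‖ ≤ A := by
    intro s
    have e3 : D s = ∫ ω, Complex.exp ((s:ℂ) * (G ω:ℂ) * I) * ((1:ℂ) - (W ω:ℂ)) ∂μ := by
      simp_rw [mul_sub, mul_one]
      rw [integral_sub (int_exp s) (int_expW s), hDdef]
    rw [e3]
    refine (norm_integral_le_integral_norm _).trans (le_of_eq ?_)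
    rw [hAdef]
    refine integral_congr_ae (Filter.Eventually.of_forall fun ω => ?_)
    dsimp only
    rw [norm_mul, aux_norm_exp, one_mul,
      show (1:ℂ) - (W ω:ℂ) = ((1 - W ω : ℝ) : ℂ) by push_cast; ring,
      Complex.norm_real, Real.norm_eq_abs]
  -- ψ and its derivative
  set ψ : ℝ → ℂ := fun s => ((Real.exp (s^2/2) : ℝ) : ℂ) * F s with hψdef
  have hexp' : ∀ s : ℝ, HasDerivAt (fun s : ℝ => Real.exp (s^2/2)) (s * Real.exp (s^2/2)) s := by
    intro s
    have hp : HasDerivAt (fun s : ℝ => s^2/2) s s := by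
      simpa using (hasDerivAt_pow 2 s).div_const 2
    simpa [mul_comm] using hp.exp
  have hψ' : ∀ s : ℝ, HasDerivAt ψ ((s:ℂ) * ((Real.exp (s^2/2) : ℝ) : ℂ) * D s) s := by
    intro s
    have h3 : HasDerivAt (fun s : ℝ => ((Real.exp (s^2/2) : ℝ) : ℂ))
        ((s * Real.exp (s^2/2) : ℝ) : ℂ) s := (hexp' s).ofReal_comp
    have h4 := h3.mul (hF' s)
    rw [hF'eq s] at h4
    refine h4.congr_deriv ?_
    rw [hDdef]
    push_cast
    ring
  -- continuity of the derivative
  have hcont : Continuous (fun s : ℝ => (s:ℂ) * ((Real.exp (s^2/2) : ℝ) : ℂ) * D s) := by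
    have c0 : ∀ ω : Ω, Continuous (fun s : ℝ => Complex.exp ((s:ℂ) * (G ω:ℂ) * I)) := by
      intro ω
      exact Complex.continuous_exp.comp
        ((Complex.continuous_ofReal.mul continuous_const).mul continuous_const)
    have c1 : Continuous F := by
      rw [hFdef]
      exact continuous_of_dominated (fun s => meas_exp s)
        (fun s => Filter.Eventually.of_forall fun ω => by
          rw [aux_norm_exp s (G ω)])
        (integrable_const (1:ℝ))
        (Filter.Eventually.of_forall fun ω => c0 ω)
    have c2 : Continuous (fun s : ℝ => ∫ ω, Complex.exp ((s:ℂ) * (G ω:ℂ) * I) * (W ω:ℂ) ∂μ) := by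
      refine continuous_of_dominated (fun s => (int_expW s).aestronglyMeasurable)
        (fun s => Filter.Eventually.of_forall fun ω => ?_) hWint.abs
        (Filter.Eventually.of_forall fun ω => (c0 ω).mul continuous_const)
      rw [norm_mul, aux_norm_exp, one_mul, Complex.norm_real, Real.norm_eq_abs]
    have cD : Continuous D := by
      rw [hDdef]; exact c1.sub c2
    refine (Continuous.mul ?_ cD)
    exact Complex.continuous_ofReal.mul
      (Complex.continuous_ofReal.comp ((continuous_pow 2).div_const 2).rexp)
  -- FTC
  have hftc : ψ t - ψ 0 = ∫ s in (0:ℝ)..t, (s:ℂ) * ((Real.exp (s^2/2) : ℝ) : ℂ) * D s :=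
    (intervalIntegral.integral_eq_sub_of_hasDerivAt (fun s _ => hψ' s)
      (hcont.intervalIntegrable 0 t)).symm
  -- bound the integral
  have hgint : IntervalIntegrable (fun s => s * Real.exp (s^2/2) * A) MeasureTheory.volume 0 t := by
    apply Continuous.intervalIntegrable
    exact (continuous_id.mul (((continuous_pow 2).div_const 2).rexp)).mul continuous_const
  have hnorm1 : ‖ψ t - ψ 0‖ ≤ |∫ s in (0:ℝ)..t, s * Real.exp (s^2/2) * A| := by
    rw [hftc]
    refine intervalIntegral.norm_integral_le_abs_of_norm_le ?_ hgint
    filter_upwards [ae_restrict_mem measurableSet_uIoc] with s hs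
    rw [Set.uIoc_of_le ht] at hs
    rw [norm_mul, norm_mul, Complex.norm_real, Complex.norm_real, Real.norm_eq_abs,
      Real.norm_eq_abs, abs_of_pos hs.1, abs_of_pos (Real.exp_pos _)]
    exact mul_le_mul_of_nonneg_left (hDbound s)
      (mul_nonneg hs.1.le (Real.exp_pos _).le)
  have hgval : ∫ s in (0:ℝ)..t, s * Real.exp (s^2/2) * A = (Real.exp (t^2/2) - 1) * A := by
    have hd : ∀ s ∈ Set.uIcc (0:ℝ) t,
        HasDerivAt (fun u => Real.exp (u^2/2) * A) (s * Real.exp (s^2/2) * A) s := by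
      intro s _
      simpa [mul_assoc] using (hexp' s).mul_const A
    rw [intervalIntegral.integral_eq_sub_of_hasDerivAt hd hgint]
    norm_num
    ring
  -- assemble
  have hψ0 : ψ 0 = 1 := by
    rw [hψdef, hFdef]
    simp
  have hE1 : (1:ℝ) ≤ Real.exp (t^2/2) := Real.one_le_exp (by positivity)
  have key1 : ‖F t - Complex.exp (-(t:ℂ)^2/2)‖ ≤ (1 - Real.exp (-(t^2)/2)) * A := by
    have he : Complex.exp (-(t:ℂ)^2/2) = ((Real.exp (-(t^2)/2) : ℝ) : ℂ) := by
      rw [show (-(t:ℂ)^2/2) = ((-(t^2)/2 : ℝ) : ℂ) by push_cast; ring, Complex.ofReal_exp]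
    have hmul : Real.exp (-(t^2)/2) * Real.exp (t^2/2) = 1 := by
      rw [← Real.exp_add]; norm_num; ring
    have hFt : F t - Complex.exp (-(t:ℂ)^2/2)
        = ((Real.exp (-(t^2)/2) : ℝ) : ℂ) * (ψ t - 1) := by
      rw [he, hψdef, mul_sub, mul_one, ← mul_assoc, ← Complex.ofReal_mul, hmul]
      norm_num
    rw [hFt, norm_mul, Complex.norm_real, Real.norm_eq_abs, abs_of_pos (Real.exp_pos _)]
    have h5 : ‖ψ t - 1‖ ≤ (Real.exp (t^2/2) - 1) * A := by
      rw [← hψ0]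
      refine hnorm1.trans (le_of_eq ?_)
      rw [hgval, _root_.abs_of_nonneg (by nlinarith)]
    calc Real.exp (-(t^2)/2) * ‖ψ t - 1‖
        ≤ Real.exp (-(t^2)/2) * ((Real.exp (t^2/2) - 1) * A) :=
          mul_le_mul_of_nonneg_left h5 (Real.exp_pos _).le
      _ = (1 - Real.exp (-(t^2)/2)) * A := by nlinarith [Real.exp_pos (-(t^2)/2)]
  have key2 : 1 - Real.exp (-(t^2)/2) ≤ |t| := by
    rw [_root_.abs_of_nonneg ht]
    rcases le_or_gt t 2 with h | h
    · nlinarith [Real.add_one_le_exp (-(t^2)/2)]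
    · nlinarith [Real.exp_pos (-(t^2)/2)]
  have key3 : A ≤ |1 - ∫ ω, G ω ^ 2 ∂μ| + Real.sqrt (∫ ω, (W ω - ∫ ω', W ω' ∂μ) ^ 2 ∂μ) := by
    obtain ⟨c, hc⟩ : ∃ c, c = ∫ ω', W ω' ∂μ := ⟨_, rfl⟩
    rw [← hc]
    have hWc : Integrable (fun ω => W ω - c) μ := hWint.sub (integrable_const c)
    have hWc2 : Integrable (fun ω => (W ω - c) ^ 2) μ := by
      have e4 : (fun ω => (W ω - c)^2) = fun ω => W ω ^ 2 - (2*c) * W ω + c^2 := by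
        funext ω; ring
      rw [e4]
      exact (hW2int.sub (hWint.const_mul (2*c))).add (integrable_const _)
    have step1 : A ≤ ∫ ω, (|1 - c| + |W ω - c|) ∂μ := by
      rw [hAdef]
      refine integral_mono ((integrable_const (1:ℝ)).sub hWint).abs
        ((integrable_const _).add hWc.abs) fun ω => ?_
      calc |1 - W ω| = |(1 - c) + (c - W ω)| := by ring_nf
        _ ≤ |1 - c| + |c - W ω| := abs_add_le _ _
        _ = |1 - c| + |W ω - c| := by rw [abs_sub_comm c]
    have step2 : ∫ ω, (|1 - c| + |W ω - c|) ∂μ = |1 - c| + ∫ ω, |W ω - c| ∂μ := by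
      rw [integral_add (integrable_const _) hWc.abs, integral_const]
      simp
    have step3 : ∫ ω, |W ω - c| ∂μ ≤ Real.sqrt (∫ ω, (W ω - c) ^ 2 ∂μ) :=
      aux_cs μ _ hWc hWc2
    have h6 : (∫ ω, G ω ^ 2 ∂μ) = c := hW_eq.symm.trans hc.symm
    rw [h6]
    rw [step2] at step1
    linarith
  calc ‖F t - Complex.exp (-(t:ℂ)^2/2)‖ ≤ (1 - Real.exp (-(t^2)/2)) * A := key1
    _ ≤ |t| * A := by
        refine mul_le_mul_of_nonneg_right key2 hA0
    _ ≤ |t| * (|1 - ∫ ω, G ω ^ 2 ∂μ| + Real.sqrt (∫ ω, (W ω - ∫ ω', W ω' ∂μ) ^ 2 ∂μ)) :=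
        mul_le_mul_of_nonneg_left key3 (abs_nonneg t)
    _ = _ := by ring

theorem stmt_13 {Ω : Type*} [MeasurableSpace Ω] (μ : Measure Ω) [IsProbabilityMeasure μ]
    (G : Ω → ℝ) (W : Ω → ℝ)
    (hGint : Integrable G μ) (hG2int : Integrable (fun ω => (G ω) ^ 2) μ)
    (hWint : Integrable W μ) (hW2int : Integrable (fun ω => (W ω) ^ 2) μ)
    (hGcenter : ∫ ω, G ω ∂μ = 0)
    (hWnonneg : ∀ ω, 0 ≤ W ω)
    (hibp : ∀ (K : NNReal) (h h' : ℝ → ℂ), (∀ x, HasDerivAt h (h' x) x) → LipschitzWith K h →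
      ∫ ω, (G ω : ℂ) * h (G ω) ∂μ = ∫ ω, h' (G ω) * (W ω : ℂ) ∂μ)
    (t : ℝ) :
    ‖(∫ ω, Complex.exp ((t : ℂ) * (G ω : ℂ) * Complex.I) ∂μ) - Complex.exp (-(t : ℂ) ^ 2 / 2)‖
      ≤ |t| * |1 - ∫ ω, (G ω) ^ 2 ∂μ|
        + |t| * Real.sqrt (∫ ω, (W ω - ∫ ω', W ω' ∂μ) ^ 2 ∂μ) := by
  rcases le_total 0 t with h | h
  · exact aux_key μ G W hGint hG2int hWint hW2int hibp t h
  · have hk := aux_key μ G W hGint hG2int hWint hW2int hibp (-t) (by linarith)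
    have e1 : ∫ ω, Complex.exp ((t:ℂ) * (G ω:ℂ) * I) ∂μ
        = (starRingEnd ℂ) (∫ ω, Complex.exp (((-t:ℝ):ℂ) * (G ω:ℂ) * I) ∂μ) := by
      rw [← integral_conj]
      refine integral_congr_ae (Filter.Eventually.of_forall fun ω => ?_)
      dsimp only
      rw [← Complex.exp_conj]
      congr 1
      simp [Complex.conj_I]
    have e2 : Complex.exp (-(t:ℂ)^2/2)
        = (starRingEnd ℂ) (Complex.exp (-((-t:ℝ):ℂ)^2/2)) := by
      rw [← Complex.exp_conj]
      rw [show -(((-t:ℝ)):ℂ)^2/2 = ((-(t^2)/2 : ℝ):ℂ) by push_cast; ring,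
        Complex.conj_ofReal,
        show -(t:ℂ)^2/2 = ((-(t^2)/2:ℝ):ℂ) by push_cast; ring]
    rw [e1, e2, ← map_sub, RCLike.norm_conj,
      show |t| = |-t| from (abs_neg t).symm]
    exact hk
end
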